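/- arXiv:2309.16930 — 2 statements merged into one kernel-verified Lean document; each statement's English description precedes it below -/
import Mathlib

section
/- Let L be a nonempty finite index set, and let (w̄_l)_{l∈L} and (w_l)_{l∈L} be families of vectors in ℝ⁶. If for every l ∈ L the deviation w_l − w̄_l lies in −conv({w̄_l : l ∈ L}) (the negation of the convex hull of the mean wrenches), then 0 ∈ conv({w_l : l ∈ L}) (the origin lies in the convex hull of the perturbed wrenches). -/
/-!
Suppose `0 ∉ conv {w l}`. Hahn–Banach gives a linear functional `f` that is negative on every
`w l`. Pick `l₀` maximizing `f (w̄ l)`, so `f ≤ f (w̄ l₀)` on `conv {w̄ l}`. By hypothesis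
`w̄ l₀ - w l₀ ∈ conv {w̄ l}`, hence `f (w̄ l₀) - f (w l₀) ≤ f (w̄ l₀)`, i.e. `0 ≤ f (w l₀)`.
-/

open Set

theorem zero_mem_convexHull_of_forall_exists_nonneg {E : Type*} [TopologicalSpace E]
    [AddCommGroup E] [IsTopologicalAddGroup E] [Module ℝ E] [ContinuousSMul ℝ E]
    [LocallyConvexSpace ℝ E] [T2Space E] {s : Set E} (hs : s.Finite)
    (h : ∀ f : StrongDual ℝ E, ∃ x ∈ s, 0 ≤ f x) :
    (0 : E) ∈ convexHull ℝ s := by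
  by_contra h0
  obtain ⟨f, u, hf, hu⟩ :=
    geometric_hahn_banach_closed_point (convex_convexHull ℝ s) (hs.isClosed_convexHull ℝ) h0
  obtain ⟨x, hx, hfx⟩ := h f
  have := hf x (subset_convexHull ℝ s hx)
  rw [map_zero] at hu
  linarith

theorem exists_nonneg_apply_of_sub_mem_neg_convexHull {𝕜 E L : Type*} [Field 𝕜] [LinearOrder 𝕜]
    [IsStrictOrderedRing 𝕜] [AddCommGroup E] [Module 𝕜 E] [Finite L] [Nonempty L]
    {wbar w : L → E} (h : ∀ l, w l - wbar l ∈ -convexHull 𝕜 (range wbar)) (f : E →ₗ[𝕜] 𝕜) :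
    ∃ l, 0 ≤ f (w l) := by
  obtain ⟨l₀, hl₀⟩ := Finite.exists_max (f ∘ wbar)
  have hmem : wbar l₀ - w l₀ ∈ convexHull 𝕜 (range wbar) := by
    simpa only [mem_neg, neg_sub] using h l₀
  obtain ⟨_, ⟨l, rfl⟩, hle⟩ :=
    (f.convexOn convex_univ).exists_ge_of_mem_convexHull (subset_univ _) hmem
  have : f (wbar l₀) - f (w l₀) ≤ f (wbar l₀) := (map_sub f _ _ ▸ hle).trans (hl₀ l)
  exact ⟨l₀, by linarith⟩

/-- **Proposition 2 (PONG).** If every wrench deviation `w l - w̄ l` lies in the negated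
convex hull of the mean wrenches, then the origin lies in the convex hull of the
perturbed wrenches. -/
theorem force_closure_of_deviations_in_neg_hull
    {L : Type*} [Fintype L] [Nonempty L]
    (wbar w : L → (Fin 6 → ℝ))
    (h : ∀ l : L, w l - wbar l ∈ -(convexHull ℝ (Set.range wbar))) :
    (0 : Fin 6 → ℝ) ∈ convexHull ℝ (Set.range w) := by
  refine zero_mem_convexHull_of_forall_exists_nonneg (finite_range w) fun f => ?_
  obtain ⟨l, hl⟩ := exists_nonneg_apply_of_sub_mem_neg_convexHull h f.toLinearMap
  exact ⟨w l, mem_range_self l, hl⟩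
end

section
/- Let n_f and n_s be positive natural numbers. For each i ∈ {1,…,n_f} and j ∈ {1,…,n_s}, let T_j^i : ℝ³ → ℝ⁶ be a linear map, let n̄^i ∈ ℝ³ be a mean normal, and let W̄ = {T_j^i n̄^i : i ∈ {1,…,n_f}, j ∈ {1,…,n_s}} be the finite set of mean basis wrenches. If vectors n^i ∈ ℝ³ (i = 1,…,n_f) satisfy T_j^i (n^i − n̄^i) ∈ −conv(W̄) for every i and j, then 0 ∈ conv({T_j^i n^i : i ∈ {1,…,n_f}, j ∈ {1,…,n_s}}). -/
/-! Write `v p = T p (n p)` and `w p = T p (n̄ p)`; the hypothesis says that every `w p - v p` is a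
convex combination of the `w q`. If `0 ∉ conv {v p}`, a separating functional `f` makes every
`f (v p)` negative. At an index `p` where `f (w p)` is largest, `f (w p - v p) ≤ f (w p)` because
`w p - v p ∈ conv {w q}`, that is `f (v p) ≥ 0`: a contradiction. -/

open Set

theorem zero_mem_convexHull_of_sub_mem_convexHull
    {E ι : Type*} [AddCommGroup E] [Module ℝ E] [TopologicalSpace E] [T2Space E]
    [IsTopologicalAddGroup E] [ContinuousSMul ℝ E] [LocallyConvexSpace ℝ E]
    [Fintype ι] [Nonempty ι] {w v : ι → E}
    (h : ∀ i, w i - v i ∈ convexHull ℝ (range w)) :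
    (0 : E) ∈ convexHull ℝ (range v) := by
  by_contra h0
  obtain ⟨f, u, hf, hu⟩ := geometric_hahn_banach_closed_point (convex_convexHull ℝ _)
    ((finite_range v).isCompact_convexHull (𝕜 := ℝ)).isClosed h0
  rw [map_zero] at hu
  obtain ⟨i, -, hi⟩ := Finset.univ.exists_max_image (fun j => f (w j)) Finset.univ_nonempty
  obtain ⟨-, ⟨j, rfl⟩, hj⟩ :=
    (f.toLinearMap.convexOn convex_univ).exists_ge_of_mem_convexHull (subset_univ _) (h i)
  have hvi := hf (v i) (subset_convexHull ℝ _ ⟨i, rfl⟩)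
  have hji := hi j (Finset.mem_univ j)
  simp only [ContinuousLinearMap.coe_coe, map_sub] at hj
  linarith

/-- **Decomposition step (PONG).** If each random normal `n i` satisfies
`T i j (n i - n̄ i) ∈ -conv(W̄)` for every pyramid edge `j`, where `W̄` is the set of
mean basis wrenches `T i j (n̄ i)`, then the induced random basis wrenches certify
force closure: `0 ∈ conv({T i j (n i)})`. -/
theorem force_closure_of_normals_in_approx_sets
    {nf ns : ℕ} (hnf : 0 < nf) (hns : 0 < ns)
    (T : Fin nf → Fin ns → ((Fin 3 → ℝ) →ₗ[ℝ] (Fin 6 → ℝ)))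
    (nbar n : Fin nf → (Fin 3 → ℝ))
    (h : ∀ i : Fin nf, ∀ j : Fin ns,
      T i j (n i - nbar i) ∈
        -(convexHull ℝ (Set.range (fun p : Fin nf × Fin ns => T p.1 p.2 (nbar p.1))))) :
    (0 : Fin 6 → ℝ) ∈
      convexHull ℝ (Set.range (fun p : Fin nf × Fin ns => T p.1 p.2 (n p.1))) := by
  have : Nonempty (Fin nf × Fin ns) := ⟨(⟨0, hnf⟩, ⟨0, hns⟩)⟩
  refine zero_mem_convexHull_of_sub_mem_convexHull (w := fun p => T p.1 p.2 (nbar p.1)) fun p => ?_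
  have hp := mem_neg.mp (h p.1 p.2)
  rwa [map_sub, neg_sub] at hp
end
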